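/- arXiv:1401.3008 — 3 statements merged into one kernel-verified Lean document; each statement's English description precedes it below -/
import Mathlib

section
/- For any connected graph G on at least 2 vertices and any edge e of the complement of G, Z(G) − 1 ≤ Z(G + e) ≤ Z(G) + 1. -/
open SimpleGraph

/-- One step of the zero forcing color-change rule: add every white vertex that is
the unique white neighbor of some black vertex. -/
def zfStep {V : Type*} (G : SimpleGraph V) (B : Set V) : Set V :=
  B ∪ {w | ∃ u ∈ B, G.Adj u w ∧ ∀ x, G.Adj u x → x ∉ B → x = w}

/-- `S` is a zero forcing set if iterating the color-change rule blackens all vertices. -/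
def IsZeroForcingSet {V : Type*} (G : SimpleGraph V) (S : Set V) : Prop :=
  ∃ n : ℕ, (zfStep G)^[n] S = Set.univ

/-- The zero forcing number: minimum cardinality of a zero forcing set. -/
noncomputable def zeroForcingNumber {V : Type*} (G : SimpleGraph V) : ℕ :=
  sInf {n | ∃ S : Set V, S.ncard = n ∧ IsZeroForcingSet G S}

/-- A (finite) graph is a path graph: nonempty, connected, acyclic, max degree ≤ 2. -/
def IsPathGraph {V : Type*} (G : SimpleGraph V) : Prop :=
  Nonempty V ∧ G.Connected ∧ G.IsAcyclic ∧ ∀ v : V, (G.neighborSet v).ncard ≤ 2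

/-- The path cover number: minimum number of vertex-disjoint induced paths covering `V`. -/
noncomputable def pathCoverNumber {V : Type*} (G : SimpleGraph V) : ℕ :=
  sInf {n | ∃ P : Finset (Set V), P.card = n ∧
    (∀ S ∈ P, IsPathGraph (G.induce S)) ∧
    (P : Set (Set V)).PairwiseDisjoint id ∧ ⋃₀ (P : Set (Set V)) = Set.univ}

/-- `u` lies on an `x`–`v` geodesic. -/
def LiesBetween {V : Type*} (G : SimpleGraph V) (x u v : V) : Prop :=
  G.dist x u + G.dist u v = G.dist x v

/-- `x` strongly resolves the pair `u, v`. -/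
def StronglyResolves {V : Type*} (G : SimpleGraph V) (x u v : V) : Prop :=
  LiesBetween G x u v ∨ LiesBetween G x v u

/-- `W` is a strong resolving set of `G`. -/
def IsStrongResolvingSet {V : Type*} (G : SimpleGraph V) (W : Set V) : Prop :=
  ∀ u v : V, u ≠ v → ∃ x ∈ W, StronglyResolves G x u v

/-- The strong metric dimension: minimum cardinality of a strong resolving set. -/
noncomputable def sdim {V : Type*} (G : SimpleGraph V) : ℕ :=
  sInf {n | ∃ W : Set V, W.ncard = n ∧ IsStrongResolvingSet G W}

/-- A leaf is a vertex of degree one. -/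
def IsLeaf {V : Type*} (G : SimpleGraph V) (v : V) : Prop :=
  (G.neighborSet v).ncard = 1

/-- `σ(G)`: the number of leaves of `G`. -/
noncomputable def leafCount {V : Type*} (G : SimpleGraph V) : ℕ :=
  {v | IsLeaf G v}.ncard

lemma subset_zfStep {V : Type*} (G : SimpleGraph V) (B : Set V) : B ⊆ zfStep G B :=
  Set.subset_union_left

lemma subset_iterate_zfStep {V : Type*} (G : SimpleGraph V) (B : Set V) (n : ℕ) :
    B ⊆ (zfStep G)^[n] B := by
  induction n with
  | zero => simp
  | succ n ih =>
    rw [Function.iterate_succ_apply']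
    exact ih.trans (subset_zfStep G _) |>.trans (by rfl)

lemma iterate_zfStep_mono {V : Type*} (G : SimpleGraph V) (B : Set V) {m n : ℕ} (h : m ≤ n) :
    (zfStep G)^[m] B ⊆ (zfStep G)^[n] B := by
  obtain ⟨k, rfl⟩ := Nat.exists_eq_add_of_le h
  rw [Nat.add_comm, Function.iterate_add_apply]
  exact subset_iterate_zfStep G _ k

lemma zf_aux {V : Type*} (G H : SimpleGraph V) (u v : V)
    (hAdj : ∀ a b, ¬(a = u ∧ b = v) → ¬(a = v ∧ b = u) → (G.Adj a b ↔ H.Adj a b))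
    (B : Set V) (hB : IsZeroForcingSet H B)
    (hA : ∀ n, v ∈ (zfStep H)^[n] B → u ∈ (zfStep H)^[n] B) :
    IsZeroForcingSet G (B ∪ {v}) := by
  obtain ⟨N, hN⟩ := hB
  refine ⟨N, ?_⟩
  have hv : ∀ m, v ∈ (zfStep G)^[m] (B ∪ {v}) := fun m =>
    subset_iterate_zfStep G _ m (Set.mem_union_right _ rfl)
  have key : ∀ n, (zfStep H)^[n] B ⊆ (zfStep G)^[n] (B ∪ {v}) := by
    intro n
    induction n with
    | zero => exact Set.subset_union_left
    | succ n ih =>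
      rw [Function.iterate_succ_apply', Function.iterate_succ_apply']
      intro w hw
      have hu_side : v ∈ (zfStep H)^[n] B → u ∈ (zfStep G)^[n] (B ∪ {v}) :=
        fun h => ih (hA n h)
      rcases hw with hw | ⟨b, hb, hbw, huniq⟩
      · exact subset_zfStep G _ (ih hw)
      · by_cases hwS : w ∈ (zfStep G)^[n] (B ∪ {v})
        · exact subset_zfStep G _ hwS
        · refine Set.mem_union_right _ ⟨b, ih hb, ?_, ?_⟩
          · have h1 : ¬(b = u ∧ w = v) := by
              rintro ⟨rfl, rfl⟩; exact hwS (hv n)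
            have h2 : ¬(b = v ∧ w = u) := by
              rintro ⟨rfl, rfl⟩; exact hwS (hu_side hb)
            exact (hAdj b w h1 h2).mpr hbw
          · intro x hx hxS
            have h1 : ¬(b = u ∧ x = v) := by
              rintro ⟨rfl, rfl⟩; exact hxS (hv n)
            have h2 : ¬(b = v ∧ x = u) := by
              rintro ⟨rfl, rfl⟩; exact hxS (hu_side hb)
            exact huniq x ((hAdj b x h1 h2).mp hx) (fun hxB => hxS (ih hxB))
  have := key N
  rw [hN] at this
  exact Set.eq_univ_of_univ_subset this

lemma zf_add_one {V : Type*} (G H : SimpleGraph V) (u v : V)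
    (hAdj : ∀ a b, ¬(a = u ∧ b = v) → ¬(a = v ∧ b = u) → (G.Adj a b ↔ H.Adj a b))
    (B : Set V) (hB : IsZeroForcingSet H B) :
    IsZeroForcingSet G (B ∪ {u}) ∨ IsZeroForcingSet G (B ∪ {v}) := by
  by_cases hA : ∀ n, v ∈ (zfStep H)^[n] B → u ∈ (zfStep H)^[n] B
  · exact Or.inr (zf_aux G H u v hAdj B hB hA)
  · push_neg at hA
    obtain ⟨n0, hv0, hu0⟩ := hA
    refine Or.inl (zf_aux G H v u (fun a b h1 h2 => hAdj a b h2 h1) B hB ?_)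
    intro n hun
    by_contra hvn
    rcases le_total n n0 with h | h
    · exact hu0 (iterate_zfStep_mono H B h hun)
    · exact hvn (iterate_zfStep_mono H B h hv0)

lemma zf_nonempty {V : Type*} (G : SimpleGraph V) :
    {n | ∃ S : Set V, S.ncard = n ∧ IsZeroForcingSet G S}.Nonempty :=
  ⟨(Set.univ : Set V).ncard, Set.univ, rfl, 0, rfl⟩

lemma zf_le {V : Type*} (G : SimpleGraph V) {S : Set V} (hS : IsZeroForcingSet G S) :
    zeroForcingNumber G ≤ S.ncard :=
  Nat.sInf_le ⟨S, rfl, hS⟩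

lemma zf_exists {V : Type*} (G : SimpleGraph V) :
    ∃ S : Set V, S.ncard = zeroForcingNumber G ∧ IsZeroForcingSet G S :=
  Nat.sInf_mem (zf_nonempty G)

lemma zf_le_add_one {V : Type*} (G H : SimpleGraph V) (u v : V)
    (hAdj : ∀ a b, ¬(a = u ∧ b = v) → ¬(a = v ∧ b = u) → (G.Adj a b ↔ H.Adj a b)) :
    zeroForcingNumber G ≤ zeroForcingNumber H + 1 := by
  obtain ⟨B, hBcard, hB⟩ := zf_exists H
  rcases zf_add_one G H u v hAdj B hB with h | h
  · calc zeroForcingNumber G ≤ (B ∪ {u}).ncard := zf_le G h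
      _ = (insert u B).ncard := by rw [Set.union_singleton]
      _ ≤ B.ncard + 1 := Set.ncard_insert_le u B
      _ = zeroForcingNumber H + 1 := by rw [hBcard]
  · calc zeroForcingNumber G ≤ (B ∪ {v}).ncard := zf_le G h
      _ = (insert v B).ncard := by rw [Set.union_singleton]
      _ ≤ B.ncard + 1 := Set.ncard_insert_le v B
      _ = zeroForcingNumber H + 1 := by rw [hBcard]

/-- Adding an edge changes the zero forcing number by at most one:
`Z(G) − 1 ≤ Z(G + e) ≤ Z(G) + 1` (the lower bound stated additively). -/
theorem zeroForcingNumber_add_edge {V : Type*} [Fintype V]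
    (G : SimpleGraph V) (hG : G.Connected) (h2 : 2 ≤ Fintype.card V)
    (u v : V) (he : Gᶜ.Adj u v) :
    zeroForcingNumber G ≤ zeroForcingNumber (G ⊔ fromEdgeSet {s(u, v)}) + 1 ∧
    zeroForcingNumber (G ⊔ fromEdgeSet {s(u, v)}) ≤ zeroForcingNumber G + 1 := by
  have hAdj : ∀ a b, ¬(a = u ∧ b = v) → ¬(a = v ∧ b = u) →
      (G.Adj a b ↔ (G ⊔ fromEdgeSet {s(u, v)}).Adj a b) := by
    intro a b h1 h2
    simp only [sup_adj, fromEdgeSet_adj, Set.mem_singleton_iff, Sym2.eq_iff]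
    tauto
  exact ⟨zf_le_add_one G _ u v hAdj,
    zf_le_add_one _ G u v (fun a b h1 h2 => (hAdj a b h1 h2).symm)⟩
end

section
/- Let T be a tree of order at least three and e an edge of the complement of T. Then sdim(T + e) ≥ sdim(T) − 2, and this bound is sharp (attained, e.g., by a comb with at least four major vertices). -/
open SimpleGraph

/-!
A leaf is an inner vertex of no geodesic, so a pair of distinct leaves is strongly resolved
only by one of its two members: a strong resolving set misses at most one leaf, and
`σ(G) - 1 ≤ sdim G`. In a tree, a pair `p ≠ q` is strongly resolved both by a leaf behind `p`
as seen from `q` and by a different leaf behind `q`, so all leaves but one form a strong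
resolving set and `sdim T ≤ σ(T) - 1`. Adding the edge `uv` can only turn `u` and `v` into
non-leaves, hence `sdim T ≤ σ(T) - 1 ≤ σ(T + e) + 1 ≤ sdim (T + e) + 2`.

Equality: in a caterpillar with six leaves, joining a leaf at one end of the spine to a leaf
at the other end leaves four leaves, three of which already strongly resolve the new graph;
so `sdim` drops from `5` to `3`.
-/

section

variable {V : Type*} {G : SimpleGraph V}

theorem isStrongResolvingSet_univ (G : SimpleGraph V) : IsStrongResolvingSet G Set.univ :=
  fun u _ _ ↦ ⟨u, trivial, Or.inl (by simp [LiesBetween])⟩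

theorem sdim_le_ncard {W : Set V} (hW : IsStrongResolvingSet G W) : sdim G ≤ W.ncard :=
  Nat.sInf_le ⟨W, rfl, hW⟩

theorem exists_isStrongResolvingSet_ncard_eq_sdim (G : SimpleGraph V) :
    ∃ W, IsStrongResolvingSet G W ∧ W.ncard = sdim G := by
  have hne : {n | ∃ W : Set V, W.ncard = n ∧ IsStrongResolvingSet G W}.Nonempty :=
    ⟨_, Set.univ, rfl, isStrongResolvingSet_univ G⟩
  obtain ⟨W, hcard, hW⟩ := Nat.sInf_mem hne
  exact ⟨W, hW, hcard⟩

theorem SimpleGraph.Connected.exists_adj_dist_add_one_eq (hG : G.Connected) {x b : V}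
    (hxb : x ≠ b) : ∃ z, G.Adj x z ∧ G.dist z b + 1 = G.dist x b := by
  obtain ⟨p, hp⟩ := hG.exists_walk_length_eq_dist x b
  have hnil : ¬p.Nil := fun h ↦ hxb h.eq
  refine ⟨p.snd, p.adj_snd hnil, le_antisymm ?_ ?_⟩
  · rw [← hp, ← p.length_tail_add_one hnil]
    exact Nat.add_le_add_right (dist_le _) 1
  · have := hG.dist_triangle (u := x) (v := p.snd) (w := b)
    rw [dist_eq_one_iff_adj.mpr (p.adj_snd hnil)] at this
    omega

theorem IsLeaf.not_liesBetween (hG : G.Connected) {l x y : V} (hl : IsLeaf G l)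
    (hx : x ≠ l) (hy : y ≠ l) : ¬LiesBetween G x l y := by
  obtain ⟨w, hw⟩ := Set.ncard_eq_one.mp hl
  have hthrough : ∀ z, z ≠ l → G.dist w z + 1 = G.dist l z := by
    intro z hz
    obtain ⟨w', hw', hdist⟩ := hG.exists_adj_dist_add_one_eq hz.symm
    obtain rfl : w' = w := by simpa [← mem_neighborSet, hw] using hw'
    exact hdist
  have hxw := hthrough x hx
  have hyw := hthrough y hy
  have htri := hG.dist_triangle (u := x) (v := w) (w := y)
  have hcomm_l : G.dist x l = G.dist l x := dist_comm
  have hcomm_w : G.dist x w = G.dist w x := dist_comm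
  rw [LiesBetween]
  omega

theorem StronglyResolves.eq_or_eq_of_isLeaf (hG : G.Connected) {x l l' : V}
    (h : StronglyResolves G x l l') (hl : IsLeaf G l) (hl' : IsLeaf G l') (hne : l ≠ l') :
    x = l ∨ x = l' := by
  by_contra! hx
  rcases h with h | h
  · exact hl.not_liesBetween hG hx.1 hne.symm h
  · exact hl'.not_liesBetween hG hx.2 hne h

theorem leafCount_le_sdim_add_one [Finite V] (hG : G.Connected) :
    leafCount G ≤ sdim G + 1 := by
  obtain ⟨W, hW, hcard⟩ := exists_isStrongResolvingSet_ncard_eq_sdim G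
  have hmissed : ({v | IsLeaf G v} \ W).Subsingleton := by
    rintro l ⟨hl, hlW⟩ l' ⟨hl', hl'W⟩
    by_contra hne
    obtain ⟨x, hxW, hx⟩ := hW l l' hne
    rcases hx.eq_or_eq_of_isLeaf hG hl hl' hne with rfl | rfl <;> contradiction
  calc leafCount G ≤ (W ∪ {v | IsLeaf G v} \ W).ncard :=
        Set.ncard_le_ncard (fun v hv ↦ by by_cases v ∈ W <;> simp_all) (Set.toFinite _)
    _ ≤ W.ncard + ({v | IsLeaf G v} \ W).ncard := Set.ncard_union_le _ _
    _ ≤ sdim G + 1 := by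
        rw [hcard]
        exact Nat.add_le_add_left (Set.ncard_le_one_iff_subsingleton.mpr hmissed) _

theorem leafCount_le_leafCount_sup_edge_add_two [Finite V] (G : SimpleGraph V) (u v : V) :
    leafCount G ≤ leafCount (G ⊔ fromEdgeSet {s(u, v)}) + 2 := by
  have hleaves : {w | IsLeaf G w} ⊆ {w | IsLeaf (G ⊔ fromEdgeSet {s(u, v)}) w} ∪ {u, v} := by
    intro w hw
    by_cases hwuv : w = u ∨ w = v
    · rcases hwuv with rfl | rfl <;> simp
    · have : (G ⊔ fromEdgeSet {s(u, v)}).neighborSet w = G.neighborSet w := by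
        ext y
        simp only [mem_neighborSet, sup_adj, fromEdgeSet_adj, Set.mem_singleton_iff, Sym2.eq_iff]
        grind
      exact Or.inl (show IsLeaf _ w by rw [IsLeaf, this]; exact hw)
  calc leafCount G ≤ _ := Set.ncard_le_ncard hleaves (Set.toFinite _)
    _ ≤ _ := Set.ncard_union_le _ _
    _ ≤ _ := Nat.add_le_add_left ((Set.ncard_insert_le u {v}).trans (by simp)) _

namespace SimpleGraph.IsTree

variable {T : SimpleGraph V} (hT : T.IsTree)
include hT

theorem eq_of_adj_of_dist_add_one_eq {x y z b : V} (hy : T.Adj x y) (hz : T.Adj x z)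
    (hyb : T.dist y b + 1 = T.dist x b) (hzb : T.dist z b + 1 = T.dist x b) : y = z := by
  obtain ⟨p, hp⟩ := hT.connected.exists_walk_length_eq_dist y b
  obtain ⟨q, hq⟩ := hT.connected.exists_walk_length_eq_dist z b
  have hgeodesics := hT.isAcyclic.subsingleton_path x b |>.elim
    ⟨p.cons hy, (p.cons hy).isPath_of_length_eq_dist (by simp [hp, hyb])⟩
    ⟨q.cons hz, (q.cons hz).isPath_of_length_eq_dist (by simp [hq, hzb])⟩
  simpa using congrArg (fun r : T.Path x b ↦ r.1.snd) hgeodesics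

theorem exists_isLeaf_liesBetween [Finite V] {a b : V} (hab : a ≠ b) :
    ∃ x, IsLeaf T x ∧ LiesBetween T x a b := by
  obtain ⟨x, hx : LiesBetween T x a b, hmax⟩ := Set.exists_max_image
    {x | LiesBetween T x a b} (T.dist · b) (Set.toFinite _) ⟨a, by simp [LiesBetween]⟩
  have hxb : x ≠ b := by
    rintro rfl
    have hx' : T.dist x a + T.dist a x = 0 := by rwa [LiesBetween, dist_self] at hx
    exact hab (hT.connected.dist_eq_zero_iff.mp (by omega))
  obtain ⟨z, hz, hzb⟩ := hT.connected.exists_adj_dist_add_one_eq hxb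
  refine ⟨x, Set.ncard_eq_one.mpr ⟨z, Set.eq_singleton_iff_unique_mem.mpr ⟨hz, fun y hy ↦ ?_⟩⟩, hx⟩
  by_contra hyz
  -- a neighbour `y ≠ z` of `x` would lie behind `a` farther from `b` than `x`
  have hyb : T.dist y b = T.dist x b + 1 := by
    rcases hT.dist_eq_dist_add_one_of_adj b hy with h | h
    · rw [dist_comm, dist_comm (u := b) (v := y)] at h
      exact absurd (hT.eq_of_adj_of_dist_add_one_eq hy hz h.symm hzb) hyz
    · rwa [dist_comm, dist_comm (u := b) (v := x)] at h
  have hyx : T.dist y x = 1 := dist_eq_one_iff_adj.mpr (adj_symm T hy)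
  have hyxa := hT.connected.dist_triangle (u := y) (v := x) (w := a)
  have hyab := hT.connected.dist_triangle (u := y) (v := a) (w := b)
  have hyF : LiesBetween T y a b := by
    rw [LiesBetween] at hx ⊢
    omega
  have := hmax y hyF
  omega

theorem isStrongResolvingSet_leaves_diff_singleton [Finite V] (l : V) :
    IsStrongResolvingSet T ({v | IsLeaf T v} \ {l}) := by
  intro p q hpq
  obtain ⟨x, hx, hxpq⟩ := hT.exists_isLeaf_liesBetween hpq
  obtain ⟨y, hy, hyqp⟩ := hT.exists_isLeaf_liesBetween hpq.symm
  have hxy : x ≠ y := by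
    rintro rfl
    have := hT.connected.pos_dist_of_ne hpq
    have := dist_comm (G := T) (u := p) (v := q)
    unfold LiesBetween at hxpq hyqp
    omega
  by_cases hxl : x = l
  · exact ⟨y, ⟨hy, by rintro rfl; exact hxy hxl⟩, Or.inr hyqp⟩
  · exact ⟨x, ⟨hx, hxl⟩, Or.inl hxpq⟩

theorem sdim_le_leafCount_sub_one [Finite V] : sdim T ≤ leafCount T - 1 := by
  rcases Set.eq_empty_or_nonempty {v | IsLeaf T v} with hL | ⟨l, hl⟩
  · obtain ⟨l⟩ := hT.connected.nonempty
    simpa [hL, leafCount] using sdim_le_ncard (hT.isStrongResolvingSet_leaves_diff_singleton l)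
  · exact (sdim_le_ncard (hT.isStrongResolvingSet_leaves_diff_singleton l)).trans_eq
      (Set.ncard_sdiff_singleton_of_mem hl)

theorem sdim_le_sdim_sup_edge_add_two [Finite V] (u v : V) :
    sdim T ≤ sdim (T ⊔ fromEdgeSet {s(u, v)}) + 2 := by
  have hconn : (T ⊔ fromEdgeSet {s(u, v)}).Connected := hT.connected.mono le_sup_left
  calc sdim T ≤ leafCount T - 1 := hT.sdim_le_leafCount_sub_one
    _ ≤ leafCount (T ⊔ fromEdgeSet {s(u, v)}) + 1 := by
        have := leafCount_le_leafCount_sup_edge_add_two T u v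
        omega
    _ ≤ sdim (T ⊔ fromEdgeSet {s(u, v)}) + 2 := by
        have := leafCount_le_sdim_add_one hconn
        omega

end SimpleGraph.IsTree

namespace SimpleGraph

theorem connected_of_forall_exists_lt_adj [Preorder V] [WellFoundedLT V] [OrderBot V]
    (h : ∀ v, v ≠ ⊥ → ∃ w < v, G.Adj v w) : G.Connected := by
  refine (connected_iff_exists_forall_reachable G).mpr ⟨⊥, fun v ↦ ?_⟩
  induction v using WellFoundedLT.induction with
  | _ v ih =>
    by_cases hv : v = ⊥
    · exact hv ▸ Reachable.refl _
    · obtain ⟨w, hwv, hadj⟩ := h v hv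
      exact (ih w hwv).trans (adj_symm G hadj).reachable

theorem dist_eq_of_descent (d : V → V → ℕ) (hdiag : ∀ u, d u u = 0)
    (hdescent : ∀ u v, u ≠ v → ∃ w, G.Adj u w ∧ d w v + 1 = d u v)
    (hlip : ∀ u v w, G.Adj u w → d u v ≤ d w v + 1) (u v : V) : G.dist u v = d u v := by
  have hwalk : ∀ n u v, d u v = n → ∃ p : G.Walk u v, p.length = n := by
    intro n
    induction n with
    | zero =>
      intro u v huv
      obtain rfl : u = v := by
        by_contra hne
        obtain ⟨w, -, hw⟩ := hdescent u v hne
        omega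
      exact ⟨.nil, rfl⟩
    | succ n ih =>
      intro u v huv
      have hne : u ≠ v := by rintro rfl; simp [hdiag] at huv
      obtain ⟨w, hadj, hw⟩ := hdescent u v hne
      obtain ⟨p, hp⟩ := ih w v (by omega)
      exact ⟨p.cons hadj, by simp [hp]⟩
  have hlower : ∀ {u v} (p : G.Walk u v), d u v ≤ p.length := by
    intro u v p
    induction p with
    | nil => simp [hdiag]
    | cons hadj p ih => exact (hlip _ _ _ hadj).trans (by simpa using ih)
  obtain ⟨p, hp⟩ := hwalk _ u v rfl
  obtain ⟨q, hq⟩ := Reachable.exists_walk_length_eq_dist ⟨p⟩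
  exact le_antisymm (hp ▸ dist_le p) (hq ▸ hlower q)

end SimpleGraph

theorem leafCount_eq_card_filter_degree_eq_one [Fintype V] [DecidableRel G.Adj] :
    leafCount G = (Finset.univ.filter fun v ↦ G.degree v = 1).card := by
  rw [leafCount, ← Set.ncard_coe_finset]
  congr 1
  ext v
  simp [IsLeaf, Set.ncard_eq_toFinset_card', ← card_neighborFinset_eq_degree, neighborFinset]

end

/-- Each vertex other than `0` is joined to its parent: the spine `0 - 1 - 2 - 3` carries
the leaves `4, 5` at `0`, `6` at `1`, `7` at `2` and `8, 9` at `3`. -/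
def caterpillarParent : Fin 10 → Fin 10 := ![0, 0, 1, 2, 0, 0, 1, 2, 3, 3]

def caterpillar : SimpleGraph (Fin 10) := fromRel fun x y ↦ y = caterpillarParent x

instance : DecidableRel caterpillar.Adj := fun x y ↦
  inferInstanceAs (Decidable (x ≠ y ∧ (y = caterpillarParent x ∨ x = caterpillarParent y)))

instance : DecidableRel (caterpillar ⊔ fromEdgeSet {s(4, 8)}).Adj := fun x y ↦
  decidable_of_iff (caterpillar.Adj x y ∨ (x = 4 ∧ y = 8 ∨ x = 8 ∧ y = 4))
    (by simp only [sup_adj, fromEdgeSet_adj, Set.mem_singleton_iff, Sym2.eq_iff]; grind)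

theorem caterpillar_isTree : caterpillar.IsTree := by
  refine isTree_iff_connected_and_card.mpr ⟨connected_of_forall_exists_lt_adj (by decide), ?_⟩
  rw [Nat.card_eq_fintype_card, ← edgeFinset_card, Nat.card_eq_fintype_card]
  decide

theorem leafCount_caterpillar : leafCount caterpillar = 6 := by
  rw [leafCount_eq_card_filter_degree_eq_one]
  decide

theorem leafCount_caterpillar_sup_edge : leafCount (caterpillar ⊔ fromEdgeSet {s(4, 8)}) = 4 := by
  rw [leafCount_eq_card_filter_degree_eq_one]
  decide

def caterpillarSupEdgeDist : Fin 10 → Fin 10 → ℕ := ![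
  ![0, 1, 2, 3, 1, 1, 2, 3, 2, 4],
  ![1, 0, 1, 2, 2, 2, 1, 2, 3, 3],
  ![2, 1, 0, 1, 3, 3, 2, 1, 2, 2],
  ![3, 2, 1, 0, 2, 4, 3, 2, 1, 1],
  ![1, 2, 3, 2, 0, 2, 3, 4, 1, 3],
  ![1, 2, 3, 4, 2, 0, 3, 4, 3, 5],
  ![2, 1, 2, 3, 3, 3, 0, 3, 4, 4],
  ![3, 2, 1, 2, 4, 4, 3, 0, 3, 3],
  ![2, 3, 2, 1, 1, 3, 4, 3, 0, 2],
  ![4, 3, 2, 1, 3, 5, 4, 3, 2, 0]]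

theorem dist_caterpillar_sup_edge (u v : Fin 10) :
    (caterpillar ⊔ fromEdgeSet {s(4, 8)}).dist u v = caterpillarSupEdgeDist u v :=
  dist_eq_of_descent _ (by decide) (by decide) (by decide) u v

theorem sdim_caterpillar_sup_edge : sdim (caterpillar ⊔ fromEdgeSet {s(4, 8)}) = 3 := by
  have hW : IsStrongResolvingSet (caterpillar ⊔ fromEdgeSet {s(4, 8)}) {6, 7, 9} := by
    simp only [IsStrongResolvingSet, StronglyResolves, LiesBetween, dist_caterpillar_sup_edge]
    decide
  have hle := sdim_le_ncard hW
  have hge := leafCount_le_sdim_add_one (caterpillar_isTree.connected.mono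
    (le_sup_left (b := fromEdgeSet {s(4, 8)})))
  rw [leafCount_caterpillar_sup_edge] at hge
  have : ({6, 7, 9} : Set (Fin 10)).ncard = 3 := by
    rw [Set.ncard_eq_toFinset_card']
    decide
  omega

theorem sdim_caterpillar : sdim caterpillar = 5 := by
  have := caterpillar_isTree.sdim_le_leafCount_sub_one
  have := leafCount_le_sdim_add_one caterpillar_isTree.connected
  rw [leafCount_caterpillar] at *
  omega

theorem sdim_tree_add_edge_general {V : Type*} [Fintype V]
    (T : SimpleGraph V) (hT : T.IsTree)
    (u v : V) :
    sdim T ≤ sdim (T ⊔ fromEdgeSet {s(u, v)}) + 2 ∧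
    ∃ (n : ℕ) (T' : SimpleGraph (Fin n)) (a b : Fin n),
      3 ≤ n ∧ T'.IsTree ∧ T'ᶜ.Adj a b ∧
      sdim (T' ⊔ fromEdgeSet {s(a, b)}) + 2 = sdim T' :=
  ⟨hT.sdim_le_sdim_sup_edge_add_two u v, 10, caterpillar, 4, 8, by norm_num, caterpillar_isTree,
    by decide, by rw [sdim_caterpillar_sup_edge, sdim_caterpillar]⟩

/-- For a tree `T` of order at least 3 and an edge `e` of its complement,
`sdim(T + e) ≥ sdim(T) − 2` (stated additively), and the bound is sharp. -/
theorem sdim_tree_add_edge {V : Type*} [Fintype V]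
    (T : SimpleGraph V) (hT : T.IsTree) (h3 : 3 ≤ Fintype.card V)
    (u v : V) (he : Tᶜ.Adj u v) :
    sdim T ≤ sdim (T ⊔ fromEdgeSet {s(u, v)}) + 2 ∧
    ∃ (n : ℕ) (T' : SimpleGraph (Fin n)) (a b : Fin n),
      3 ≤ n ∧ T'.IsTree ∧ T'ᶜ.Adj a b ∧
      sdim (T' ⊔ fromEdgeSet {s(a, b)}) + 2 = sdim T' :=
  sdim_tree_add_edge_general T hT u v
end

section
/- Let G be a connected graph with a peripheral leaf ℓ, i.e., a leaf whose unique neighbor u has degree 2 in G. Then sdim(G − ℓ) = sdim(G). -/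
/-!
A set `W` strongly resolves a connected graph exactly when it meets every pair of mutually
maximally distant vertices, so `sdim` is the minimum size of such a transversal. Since `ℓ` is a
leaf, no geodesic passes through it and distances in `G - ℓ` are those of `G`. In `G` the
vertex `u` is maximally distant from no vertex (one of `ℓ` and its other neighbour is always
farther away), while in `G - ℓ` it has become a leaf, maximally distant from everything, just
as `ℓ` was in `G`. Hence exchanging `u` for `ℓ` carries the mutually maximally distant pairs of
`G - ℓ` bijectively onto those of `G`, and the minimum transversals have the same size.
-/

open SimpleGraph

namespace SimpleGraph

variable {V V' : Type*} {G : SimpleGraph V} {G' : SimpleGraph V'}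

def IsMaxDistantFrom (G : SimpleGraph V) (a b : V) : Prop :=
  ∀ c, G.Adj a c → G.dist c b ≤ G.dist a b

def IsMutuallyMaxDistant (G : SimpleGraph V) (a b : V) : Prop :=
  G.IsMaxDistantFrom a b ∧ G.IsMaxDistantFrom b a

lemma Reachable.exists_adj_dist_add_one {a b : V} (h : G.Reachable a b) (hab : a ≠ b) :
    ∃ c, G.Adj a c ∧ G.dist c b + 1 = G.dist a b := by
  obtain ⟨p, hp⟩ := h.exists_walk_length_eq_dist
  obtain ⟨c, hac, q, rfl⟩ := Walk.exists_eq_cons_of_ne hab p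
  have hle := dist_le q
  have hcb : G.Reachable c b := ⟨q⟩
  have htri := hcb.dist_triangle_right a
  rw [dist_eq_one_iff_adj.2 hac] at htri
  rw [Walk.length_cons] at hp
  exact ⟨c, hac, by omega⟩

lemma isMaxDistantFrom_of_subsingleton_neighborSet (hG : G.Connected) {a b : V}
    (ha : (G.neighborSet a).Subsingleton) (hab : a ≠ b) : G.IsMaxDistantFrom a b := by
  intro c hac
  obtain ⟨c', hac', hc'⟩ := (hG a b).exists_adj_dist_add_one hab
  rw [ha hac hac']
  omega

lemma isStrongResolvingSet_univ : IsStrongResolvingSet G Set.univ := by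
  intro a _ _
  exact ⟨a, trivial, Or.inl (by simp [LiesBetween])⟩

lemma sdim_le {W : Set V} (hW : IsStrongResolvingSet G W) : sdim G ≤ W.ncard :=
  Nat.sInf_le ⟨W, rfl, hW⟩

lemma exists_isStrongResolvingSet_ncard_eq_sdim (G : SimpleGraph V) :
    ∃ W : Set V, W.ncard = sdim G ∧ IsStrongResolvingSet G W := by
  have hne : {n | ∃ W : Set V, W.ncard = n ∧ IsStrongResolvingSet G W}.Nonempty :=
    ⟨_, Set.univ, rfl, isStrongResolvingSet_univ⟩
  exact Nat.sInf_mem hne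

lemma eq_of_liesBetween_of_isMaxDistantFrom (hG : G.Connected) {x y z : V}
    (h : LiesBetween G x y z) (hy : G.IsMaxDistantFrom y z) : x = y := by
  by_contra hxy
  obtain ⟨c, hyc, hc⟩ := (hG y x).exists_adj_dist_add_one (Ne.symm hxy)
  have hcz := hy c hyc
  have htri := hG.dist_triangle (u := x) (v := c) (w := z)
  rw [G.dist_comm (u := x) (v := c)] at htri
  rw [LiesBetween, G.dist_comm (u := x) (v := y)] at h
  omega

/-- Among the `p` with `a` on a `p`–`b` geodesic, one farthest from `b` is maximally distant
from `b`. -/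
lemma exists_liesBetween_isMaxDistantFrom [Finite V] (hG : G.Connected) (a b : V) :
    ∃ p, LiesBetween G p a b ∧ G.IsMaxDistantFrom p b := by
  obtain ⟨p, hpab, hmax⟩ := Set.exists_max_image {x | LiesBetween G x a b} (G.dist · b)
    (Set.toFinite _) ⟨a, by simp [LiesBetween]⟩
  refine ⟨p, hpab, fun c hpc => ?_⟩
  by_contra! hlt
  have hcp : G.dist c p = 1 := dist_eq_one_iff_adj.2 hpc.symm
  have h₁ := hG.dist_triangle (u := c) (v := p) (w := b)
  have h₂ := hG.dist_triangle (u := c) (v := p) (w := a)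
  have h₃ := hG.dist_triangle (u := c) (v := a) (w := b)
  have hpab' : LiesBetween G p a b := hpab
  have hcab : LiesBetween G c a b := by
    unfold LiesBetween at hpab' ⊢
    omega
  have := hmax c hcab
  omega

lemma exists_isMutuallyMaxDistant_liesBetween [Finite V] (hG : G.Connected) {a b : V}
    (hab : a ≠ b) : ∃ p r, p ≠ r ∧ G.IsMutuallyMaxDistant p r ∧
      LiesBetween G p a b ∧ LiesBetween G r b a := by
  obtain ⟨p, hpab, hp⟩ := exists_liesBetween_isMaxDistantFrom hG a b
  obtain ⟨r, hrbp, hr⟩ := exists_liesBetween_isMaxDistantFrom hG b p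
  unfold LiesBetween at hpab hrbp ⊢
  have hba := G.dist_comm (u := b) (v := a)
  have hbp := G.dist_comm (u := b) (v := p)
  have hrp := G.dist_comm (u := r) (v := p)
  have hap := G.dist_comm (u := a) (v := p)
  have hdab := hG.pos_dist_of_ne hab
  -- `p` is maximally distant from `r` because `b` lies on a `p`–`r` geodesic.
  refine ⟨p, r, ?_, ⟨fun c hpc => ?_, hr⟩, hpab, ?_⟩
  · rintro rfl
    simp only [dist_self] at hrbp
    omega
  · have := hp c hpc
    have := hG.dist_triangle (u := c) (v := b) (w := r)
    have := G.dist_comm (u := b) (v := r)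
    omega
  · have := hG.dist_triangle (u := r) (v := b) (w := a)
    have := hG.dist_triangle (u := r) (v := a) (w := p)
    omega

theorem isStrongResolvingSet_iff [Finite V] (hG : G.Connected) {W : Set V} :
    IsStrongResolvingSet G W ↔
      ∀ a b, a ≠ b → G.IsMutuallyMaxDistant a b → a ∈ W ∨ b ∈ W := by
  constructor
  · rintro hW a b hab ⟨ha, hb⟩
    obtain ⟨x, hxW, hx | hx⟩ := hW a b hab
    · exact .inl (eq_of_liesBetween_of_isMaxDistantFrom hG hx ha ▸ hxW)
    · exact .inr (eq_of_liesBetween_of_isMaxDistantFrom hG hx hb ▸ hxW)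
  · intro hW a b hab
    obtain ⟨p, r, hpr, hmmd, hp, hr⟩ := exists_isMutuallyMaxDistant_liesBetween hG hab
    rcases hW p r hpr hmmd with h | h
    exacts [⟨p, h, .inl hp⟩, ⟨r, h, .inr hr⟩]

lemma sdim_le_of_injective [Finite V] [Finite V'] (hG : G.Connected) (hG' : G'.Connected)
    {σ : V' → V} (hσ : Function.Injective σ)
    (hmmd : ∀ a b, a ≠ b → G'.IsMutuallyMaxDistant a b →
      G.IsMutuallyMaxDistant (σ a) (σ b)) :
    sdim G' ≤ sdim G := by
  obtain ⟨W, hWcard, hW⟩ := exists_isStrongResolvingSet_ncard_eq_sdim G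
  rw [isStrongResolvingSet_iff hG] at hW
  have hW' : IsStrongResolvingSet G' (σ ⁻¹' W) := (isStrongResolvingSet_iff hG').2
    fun a b hab h => hW (σ a) (σ b) (hσ.ne hab) (hmmd a b hab h)
  calc sdim G' ≤ (σ ⁻¹' W).ncard := sdim_le hW'
    _ ≤ W.ncard := Set.ncard_le_ncard_of_injOn σ (fun _ h => h) hσ.injOn
    _ = sdim G := hWcard

lemma sdim_le_of_isMaxDistantFrom_mem_range [Finite V] [Finite V'] (hG : G.Connected)
    (hG' : G'.Connected) {σ : V' → V}
    (hrange : ∀ a b, G.IsMaxDistantFrom a b → a ∈ Set.range σ)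
    (hmmd : ∀ a b, a ≠ b → G.IsMutuallyMaxDistant (σ a) (σ b) →
      G'.IsMutuallyMaxDistant a b) :
    sdim G ≤ sdim G' := by
  obtain ⟨W, hWcard, hW⟩ := exists_isStrongResolvingSet_ncard_eq_sdim G'
  rw [isStrongResolvingSet_iff hG'] at hW
  have hσW : IsStrongResolvingSet G (σ '' W) := by
    refine (isStrongResolvingSet_iff hG).2 fun a b hab h => ?_
    obtain ⟨a, rfl⟩ := hrange _ _ h.1
    obtain ⟨b, rfl⟩ := hrange _ _ h.2
    have hab' : a ≠ b := fun h => hab (congrArg σ h)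
    exact (hW a b hab' (hmmd a b hab' h)).imp (Set.mem_image_of_mem σ) (Set.mem_image_of_mem σ)
  calc sdim G ≤ (σ '' W).ncard := sdim_le hσW
    _ ≤ W.ncard := Set.ncard_image_le W.toFinite
    _ = sdim G' := hWcard

lemma dist_induce_eq_of_subsingleton_neighborSet {s : Set V}
    (hs : ∀ v ∉ s, (G.neighborSet v).Subsingleton) {a b : s} (h : G.Reachable a b) :
    (G.induce s).dist a b = G.dist a b := by
  obtain ⟨p, hp, hlen⟩ := h.exists_path_of_dist
  have hps : ∀ x ∈ p.support, x ∈ s := fun x hx => by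
    by_contra hxs
    exact hp.isTrail.not_mem_support_of_subsingleton_neighborSet
      (by rintro rfl; exact hxs a.2) (by rintro rfl; exact hxs b.2) (hs x hxs) hx
  apply le_antisymm
  · calc (G.induce s).dist a b ≤ (p.induce s hps).length := dist_le _
      _ = p.length := by
        have := congrArg Walk.length (p.map_induce hps)
        rwa [Walk.length_map] at this
      _ = G.dist a b := hlen
  · have hreach : (G.induce s).Reachable a b := ⟨p.induce s hps⟩
    obtain ⟨q, hq⟩ := hreach.exists_walk_length_eq_dist
    calc G.dist a b ≤ (q.map (Embedding.induce s).toHom).length := dist_le _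
      _ = (G.induce s).dist a b := by rw [Walk.length_map, hq]

section Leaf

variable {l u : V}

lemma adj_iff_eq_of_neighborSet_eq_singleton (hl : G.neighborSet l = {u}) {c : V} :
    G.Adj l c ↔ c = u := by
  rw [← mem_neighborSet, hl, Set.mem_singleton_iff]

lemma subsingleton_neighborSet_of_notMem (hl : G.neighborSet l = {u}) {v : V}
    (hv : v ∉ {x | x ≠ l}) : (G.neighborSet v).Subsingleton := by
  obtain rfl : v = l := not_not.1 hv
  exact hl ▸ Set.subsingleton_singleton

lemma dist_induce_ne_leaf (hG : G.Connected) (hl : G.neighborSet l = {u})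
    (a b : {x | x ≠ l}) : (G.induce {x | x ≠ l}).dist a b = G.dist a b :=
  dist_induce_eq_of_subsingleton_neighborSet (fun _ => subsingleton_neighborSet_of_notMem hl)
    (hG a b)

lemma connected_induce_ne_leaf (hG : G.Connected) (hl : G.neighborSet l = {u}) :
    (G.induce {x | x ≠ l}).Connected :=
  (connected_iff _).2 ⟨hG.preconnected.induce_of_degree_eq_one
    fun _ => subsingleton_neighborSet_of_notMem hl,
    ⟨⟨u, ((adj_iff_eq_of_neighborSet_eq_singleton hl).2 rfl).ne.symm⟩⟩⟩

lemma dist_leaf_eq_dist_add_one (hG : G.Connected) (hl : G.neighborSet l = {u}) {a : V}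
    (ha : a ≠ l) : G.dist l a = G.dist u a + 1 := by
  obtain ⟨c, hlc, hc⟩ := (hG l a).exists_adj_dist_add_one (Ne.symm ha)
  rw [← (adj_iff_eq_of_neighborSet_eq_singleton hl).1 hlc, hc]

lemma isMaxDistantFrom_induce_iff {s : Set V} {a b : s} {t : V} {k : ℕ}
    (ha : G.neighborSet a ⊆ s) (hd : ∀ x : s, G.dist x t = (G.induce s).dist x b + k) :
    (G.induce s).IsMaxDistantFrom a b ↔ G.IsMaxDistantFrom a t := by
  constructor
  · intro h c hac
    have hc : G.dist c t = _ := hd ⟨c, ha hac⟩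
    have := h ⟨c, ha hac⟩ hac
    rw [hc, hd a]
    omega
  · intro h c hac
    have := h c hac
    rw [hd a, hd c] at this
    omega

lemma isMaxDistantFrom_swap_iff [DecidableEq V] (hG : G.Connected)
    (hl : G.neighborSet l = {u}) (hu : (G.neighborSet u \ {l}).Subsingleton)
    {a b : {x | x ≠ l}} (hab : a ≠ b) :
    G.IsMaxDistantFrom (Equiv.swap u l a) (Equiv.swap u l b) ↔
      (G.induce {x | x ≠ l}).IsMaxDistantFrom a b := by
  by_cases hau : a.1 = u
  · have hbu : b.1 ≠ u := fun h => hab (Subtype.ext (hau.trans h.symm))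
    rw [hau, Equiv.swap_apply_left, Equiv.swap_apply_of_ne_of_ne hbu b.2]
    have ha : ((G.induce {x | x ≠ l}).neighborSet a).Subsingleton := fun x hx y hy =>
      Subtype.ext (hu ⟨hau ▸ hx, x.2⟩ ⟨hau ▸ hy, y.2⟩)
    exact iff_of_true
      (isMaxDistantFrom_of_subsingleton_neighborSet hG (hl ▸ Set.subsingleton_singleton)
        (Ne.symm b.2))
      (isMaxDistantFrom_of_subsingleton_neighborSet (connected_induce_ne_leaf hG hl) ha hab)
  have ha : G.neighborSet a ⊆ {x | x ≠ l} := by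
    rintro c hac rfl
    exact hau ((adj_iff_eq_of_neighborSet_eq_singleton hl).1 hac.symm)
  rw [Equiv.swap_apply_of_ne_of_ne hau a.2]
  by_cases hbu : b.1 = u
  · rw [hbu, Equiv.swap_apply_left]
    refine (isMaxDistantFrom_induce_iff (k := 1) ha fun x => ?_).symm
    rw [dist_comm, dist_leaf_eq_dist_add_one hG hl x.2, dist_induce_ne_leaf hG hl, hbu,
      dist_comm]
  · rw [Equiv.swap_apply_of_ne_of_ne hbu b.2]
    exact (isMaxDistantFrom_induce_iff (k := 0) ha fun x =>
      (dist_induce_ne_leaf hG hl x b).symm).symm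

lemma isMutuallyMaxDistant_swap_iff [DecidableEq V] (hG : G.Connected)
    (hl : G.neighborSet l = {u}) (hu : (G.neighborSet u \ {l}).Subsingleton)
    {a b : {x | x ≠ l}} (hab : a ≠ b) :
    G.IsMutuallyMaxDistant (Equiv.swap u l a) (Equiv.swap u l b) ↔
      (G.induce {x | x ≠ l}).IsMutuallyMaxDistant a b :=
  and_congr (isMaxDistantFrom_swap_iff hG hl hu hab) (isMaxDistantFrom_swap_iff hG hl hu hab.symm)

lemma not_isMaxDistantFrom_of_adj (hG : G.Connected) (hl : G.neighborSet l = {u}) {w : V}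
    (huw : G.Adj u w) (hwl : w ≠ l) (a : V) : ¬ G.IsMaxDistantFrom u a := by
  have hlu := (adj_iff_eq_of_neighborSet_eq_singleton hl).2 rfl
  intro h
  by_cases hal : a = l
  · subst hal
    have := h w huw
    rw [dist_comm, dist_leaf_eq_dist_add_one hG hl hwl, dist_eq_one_iff_adj.2 huw,
      dist_eq_one_iff_adj.2 hlu.symm] at this
    omega
  · have := h l hlu.symm
    rw [dist_leaf_eq_dist_add_one hG hl hal] at this
    omega

lemma mem_range_swap_of_ne [DecidableEq V] {x : V} (hx : x ≠ u) :
    x ∈ Set.range fun a : {y | y ≠ l} => Equiv.swap u l a := by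
  refine ⟨⟨Equiv.swap u l x, fun h => hx ?_⟩, Equiv.swap_apply_self _ _ _⟩
  rwa [Equiv.swap_apply_eq_iff, Equiv.swap_apply_right] at h

end Leaf

end SimpleGraph

theorem sdim_remove_peripheral_leaf_general {V : Type*} [Fintype V]
    (G : SimpleGraph V) (hG : G.Connected)
    (l u : V) (hl : G.neighborSet l = {u}) (hu : (G.neighborSet u).ncard = 2) :
    sdim (G.induce {x | x ≠ l}) = sdim G := by
  classical
  have hlu : l ∈ G.neighborSet u := ((adj_iff_eq_of_neighborSet_eq_singleton hl).2 rfl).symm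
  obtain ⟨w, hw⟩ : ∃ w, G.neighborSet u \ {l} = {w} :=
    Set.ncard_eq_one.1 (by rw [Set.ncard_sdiff_singleton_of_mem hlu, hu])
  obtain ⟨huw, hwl⟩ : w ∈ G.neighborSet u \ {l} := hw ▸ rfl
  have hG' := connected_induce_ne_leaf hG hl
  have hmmd : ∀ a b : {x | x ≠ l}, a ≠ b →
      (G.IsMutuallyMaxDistant (Equiv.swap u l a) (Equiv.swap u l b) ↔
        (G.induce {x | x ≠ l}).IsMutuallyMaxDistant a b) :=
    fun _ _ => isMutuallyMaxDistant_swap_iff hG hl (hw ▸ Set.subsingleton_singleton)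
  have hrange : ∀ a b, G.IsMaxDistantFrom a b →
      a ∈ Set.range fun x : {x | x ≠ l} => Equiv.swap u l x := fun a b ha =>
    mem_range_swap_of_ne (by rintro rfl; exact not_isMaxDistantFrom_of_adj hG hl huw hwl b ha)
  exact le_antisymm
    (sdim_le_of_injective hG hG' ((Equiv.swap u l).injective.comp Subtype.val_injective)
      fun a b hab => (hmmd a b hab).2)
    (sdim_le_of_isMaxDistantFrom_mem_range hG hG' hrange fun a b hab => (hmmd a b hab).1)

/-- Removing a peripheral leaf (a leaf whose unique neighbor has degree 2) of a connected
graph does not change the strong metric dimension. -/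
theorem sdim_remove_peripheral_leaf {V : Type*} [Fintype V]
    (G : SimpleGraph V) (hG : G.Connected) (h2 : 2 ≤ Fintype.card V)
    (l u : V) (hl : G.neighborSet l = {u}) (hu : (G.neighborSet u).ncard = 2) :
    sdim (G.induce {x | x ≠ l}) = sdim G :=
  sdim_remove_peripheral_leaf_general G hG l u hl hu
end
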